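/- arXiv:2204.01938 — 8 statements merged into one kernel-verified Lean document; each statement's English description precedes it below -/
import Mathlib

section
/- For any digraph G, τ*(G) ≤ τ(G) ≤ 3τ*(G), where τ(G) = max over all subsets A, B ⊆ V of e(A,B) − e(B,A), and τ*(G) is the same maximum restricted to disjoint pairs A, B. -/
open Finset

section FASDefs

variable {V : Type*} [Fintype V] [DecidableEq V]

/-- Existence of a directed cycle of length `l` in the digraph with edge relation `E`. -/
def hasDirCycleLen (E : V → V → Prop) (l : ℕ) : Prop :=
  ∃ (hl : 0 < l) (v : Fin l → V),
    ∀ i : Fin l, E (v i) (v ⟨(i.1 + 1) % l, Nat.mod_lt _ hl⟩)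

/-- Existence of a directed cycle (of any length). -/
def hasDirCycle (E : V → V → Prop) : Prop := ∃ l : ℕ, hasDirCycleLen E l

/-- `S` is a feedback arc set of the digraph with edge relation `E`. -/
def IsFAS (E : V → V → Prop) (S : Finset (V × V)) : Prop :=
  (∀ e ∈ S, E e.1 e.2) ∧ ¬ hasDirCycle (fun a b => E a b ∧ (a, b) ∉ S)

/-- `beta E` is the minimum size of a feedback arc set. -/
noncomputable def beta (E : V → V → Prop) : ℕ :=
  sInf {k | ∃ S : Finset (V × V), IsFAS E S ∧ S.card = k}

/-- Number of directed edges. -/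
def edgeCount (E : V → V → Prop) [DecidableRel E] : ℕ :=
  ((univ : Finset (V × V)).filter (fun p => E p.1 p.2)).card

/-- `eAB E A B` is the number of directed edges from `A` to `B`. -/
def eAB (E : V → V → Prop) [DecidableRel E] (A B : Finset V) : ℕ :=
  ((A ×ˢ B).filter (fun p => E p.1 p.2)).card

/-- Directional discrepancy `τ(G)`: max of `e(A,B) - e(B,A)` over all pairs of subsets. -/
noncomputable def tau (E : V → V → Prop) [DecidableRel E] : ℤ :=
  Finset.sup' (univ : Finset (Finset V × Finset V)) ⟨(∅, ∅), mem_univ _⟩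
    fun AB => (eAB E AB.1 AB.2 : ℤ) - (eAB E AB.2 AB.1 : ℤ)

/-- `τ*(G)`: max of `e(A,B) - e(B,A)` over disjoint pairs of subsets. -/
noncomputable def tauStar (E : V → V → Prop) [DecidableRel E] : ℤ :=
  Finset.sup' ((univ : Finset (Finset V × Finset V)).filter fun AB => Disjoint AB.1 AB.2)
    ⟨(∅, ∅), by simp⟩
    fun AB => (eAB E AB.1 AB.2 : ℤ) - (eAB E AB.2 AB.1 : ℤ)

/-- `τ_⊔(G)`: max of `e(A,B) - e(B,A)` over partitions `V = A ⊔ B`. -/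
noncomputable def tauPart (E : V → V → Prop) [DecidableRel E] : ℤ :=
  Finset.sup' (univ : Finset (Finset V)) ⟨∅, mem_univ _⟩
    fun A => (eAB E A Aᶜ : ℤ) - (eAB E Aᶜ A : ℤ)

/-- Directed surplus `π(G) = m/2 - β(G)`. -/
noncomputable def surplus (E : V → V → Prop) [DecidableRel E] : ℝ :=
  (edgeCount E : ℝ) / 2 - (beta E : ℝ)

/-- Indegree `d⁺(v)`. -/
def inDeg (E : V → V → Prop) [DecidableRel E] (v : V) : ℕ :=
  (univ.filter fun w => E w v).card

/-- Outdegree `d⁻(v)`. -/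
def outDeg (E : V → V → Prop) [DecidableRel E] (v : V) : ℕ :=
  (univ.filter fun w => E v w).card

end FASDefs

/-- Number of labeled copies of the digraph `(W, EB)` in the digraph `(V, E)`:
injective maps preserving directed edges. -/
noncomputable def NL {W V : Type*} (EB : W → W → Prop) (E : V → V → Prop) : ℕ :=
  Nat.card {f : W ↪ V // ∀ a b, EB a b → E (f a) (f b)}
/-!
Split `A = (A \ B) ∪ C` and `B = (B \ A) ∪ C` with `C = A ∩ B`. The edges inside `C` cancel in
`e(A,B) - e(B,A)`, which therefore equals the sum of the discrepancies of the three disjoint pairs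
`(A \ B, B \ A)`, `(A \ B, C)` and `(C, B \ A)`, each at most `τ*(G)`.
-/

section Discrepancy

variable {V : Type*} (E : V → V → Prop) [DecidableRel E]

lemma eAB_union_left [DecidableEq V] {A B : Finset V} (C : Finset V) (h : Disjoint A B) :
    eAB E (A ∪ B) C = eAB E A C + eAB E B C := by
  rw [eAB, union_product, filter_union,
    card_union_of_disjoint (disjoint_filter_filter (disjoint_product.2 (Or.inl h)))]
  rfl

lemma eAB_union_right [DecidableEq V] {A B : Finset V} (C : Finset V) (h : Disjoint A B) :
    eAB E C (A ∪ B) = eAB E C A + eAB E C B := by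
  rw [eAB, product_union, filter_union,
    card_union_of_disjoint (disjoint_filter_filter (disjoint_product.2 (Or.inr h)))]
  rfl

lemma eAB_union_sub_eAB_union [DecidableEq V] {X Y C : Finset V}
    (hX : Disjoint X C) (hY : Disjoint Y C) :
    (eAB E (X ∪ C) (Y ∪ C) : ℤ) - eAB E (Y ∪ C) (X ∪ C) =
      ((eAB E X Y : ℤ) - eAB E Y X) + ((eAB E X C : ℤ) - eAB E C X) +
        ((eAB E C Y : ℤ) - eAB E Y C) := by
  rw [eAB_union_left E _ hX, eAB_union_left E _ hY, eAB_union_right E _ hX,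
    eAB_union_right E _ hX, eAB_union_right E _ hY, eAB_union_right E _ hY]
  push_cast
  ring

variable [Fintype V] [DecidableEq V]

lemma sub_eAB_le_tauStar {A B : Finset V} (h : Disjoint A B) :
    (eAB E A B : ℤ) - eAB E B A ≤ tauStar E :=
  le_sup' (fun AB : Finset V × Finset V => (eAB E AB.1 AB.2 : ℤ) - eAB E AB.2 AB.1)
    (mem_filter.2 ⟨mem_univ (A, B), h⟩)

lemma tauStar_le_tau : tauStar E ≤ tau E :=
  sup'_mono _ (filter_subset _ _) _

lemma tau_le_three_mul_tauStar : tau E ≤ 3 * tauStar E := by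
  refine sup'_le _ _ fun ⟨A, B⟩ _ => ?_
  have hA : A \ B ∪ A ∩ B = A := sdiff_union_inter A B
  have hB : B \ A ∪ A ∩ B = B := by rw [inter_comm]; exact sdiff_union_inter B A
  have hAC : Disjoint (A \ B) (A ∩ B) := disjoint_sdiff_inter A B
  have hBC : Disjoint (B \ A) (A ∩ B) := by rw [inter_comm]; exact disjoint_sdiff_inter B A
  have split := eAB_union_sub_eAB_union E hAC hBC
  rw [hA, hB] at split
  have h₁ := sub_eAB_le_tauStar E (disjoint_sdiff_sdiff : Disjoint (A \ B) (B \ A))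
  have h₂ := sub_eAB_le_tauStar E hAC
  have h₃ := sub_eAB_le_tauStar E hBC.symm
  dsimp only
  linarith

end Discrepancy

/-- `τ*(G) ≤ τ(G) ≤ 3 τ*(G)`. -/
theorem stmt1 {V : Type*} [Fintype V] [DecidableEq V] (E : V → V → Prop) [DecidableRel E] :
    tauStar E ≤ tau E ∧ tau E ≤ 3 * tauStar E :=
  ⟨tauStar_le_tau E, tau_le_three_mul_tauStar E⟩
end

section
/- If B and B′ are digraphs with the same underlying undirected graph on k vertices, B has e(B) edges, and G is a digraph on n vertices, then |N_L(B, G) − N_L(B′, G)| ≤ e(B) · n^{k−2} · τ(G). -/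
open Finset

/-!
Reverse, one at a time, the arcs of `B` that `B'` orients the other way. Reversing a single arc
`uv` changes the number of copies by at most `n^(k-2) τ(G)`: once the images `g` of the other
`k - 2` vertices are fixed, the admissible images of `u` and of `v` form two sets `A_g`, `B_g`,
and the copies extending `g` are counted by `e(A_g, B_g)` before the reversal and by `e(B_g, A_g)`
after it.
-/

section Discrepancy

variable {V : Type*} [Fintype V] (E : V → V → Prop) [DecidableRel E]

lemma sub_le_tau (A B : Finset V) : (eAB E A B : ℤ) - eAB E B A ≤ tau E :=
  Finset.le_sup' (fun AB : Finset V × Finset V => (eAB E AB.1 AB.2 : ℤ) - eAB E AB.2 AB.1)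
    (mem_univ (A, B))

lemma abs_sub_le_tau (A B : Finset V) : |(eAB E A B : ℤ) - eAB E B A| ≤ tau E :=
  abs_sub_le_iff.2 ⟨sub_le_tau E A B, sub_le_tau E B A⟩

lemma tau_nonneg : 0 ≤ tau E := by
  simpa using sub_le_tau E ∅ ∅

omit [Fintype V] in
lemma card_filter_swap_eq_eAB (A B : Finset V) :
    #((A ×ˢ B).filter fun p => E p.2 p.1) = eAB E B A :=
  card_bij (fun p _ => p.swap) (by simp +contextual) (by simp)
    (fun p hp => ⟨p.swap, by simpa [and_comm] using hp, rfl⟩)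

end Discrepancy

section Splitting

variable {W V : Type*} {u v : W}

abbrev OffPair (u v : W) := {w : W // w ≠ u ∧ w ≠ v}

lemma eq_or_eq_or_offPair (a : W) : a = u ∨ a = v ∨ ∃ s : OffPair u v, (s : W) = a := by
  by_cases hau : a = u
  · exact .inl hau
  by_cases hav : a = v
  · exact .inr (.inl hav)
  exact .inr (.inr ⟨⟨a, hau, hav⟩, rfl⟩)

def splitAtPair [DecidableEq W] (huv : u ≠ v) : (W → V) ≃ (OffPair u v → V) × V × V where
  toFun f := (fun s => f s, f u, f v)
  invFun p w := if hu : w = u then p.2.1 else if hv : w = v then p.2.2 else p.1 ⟨w, hu, hv⟩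
  left_inv f := by funext w; dsimp only; split_ifs <;> simp_all
  right_inv p := by
    obtain ⟨g, x, y⟩ := p
    simp [huv.symm, fun s : OffPair u v => s.2.1, fun s : OffPair u v => s.2.2]

lemma card_offPair_fun [DecidableEq W] [Fintype W] [Fintype V] (huv : u ≠ v) :
    Fintype.card (OffPair u v → V) = Fintype.card V ^ (Fintype.card W - 2) := by
  rw [Fintype.card_fun, Fintype.card_subtype]
  congr 1
  have : (univ.filter fun w : W => w ≠ u ∧ w ≠ v) = ({u, v} : Finset W)ᶜ := by
    ext w; simp
  rw [this, card_compl, card_pair huv]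

end Splitting

section Copies

def IsCopy {ι V : Type*} (F : ι → ι → Prop) (E : V → V → Prop) (f : ι → V) : Prop :=
  Function.Injective f ∧ ∀ a b, F a b → E (f a) (f b)

variable {W V : Type*} (F : W → W → Prop) (E : V → V → Prop) {u v : W}

lemma injective_iff_offPair {f : W → V} (hf : f u ≠ f v) :
    Function.Injective f ↔ Function.Injective (fun s : OffPair u v => f s) ∧
      (∀ s : OffPair u v, f s ≠ f u) ∧ (∀ s : OffPair u v, f s ≠ f v) := by
  refine ⟨fun hinj => ⟨fun s t h => Subtype.ext (hinj h), fun s h => s.2.1 (hinj h),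
    fun s h => s.2.2 (hinj h)⟩, fun ⟨hg, hsu, hsv⟩ a b hab => ?_⟩
  have ha := eq_or_eq_or_offPair (u := u) (v := v) a
  have hb := eq_or_eq_or_offPair (u := u) (v := v) b
  rcases ha with rfl | rfl | ⟨s, rfl⟩ <;> rcases hb with rfl | rfl | ⟨t, rfl⟩
  all_goals first
    | rfl | exact congrArg Subtype.val (hg hab)
    | exact (hf hab).elim | exact (hf hab.symm).elim
    | exact (hsu _ hab).elim | exact (hsu _ hab.symm).elim
    | exact (hsv _ hab).elim | exact (hsv _ hab.symm).elim

lemma map_rel_iff_offPair (hu : ¬F u u) (hv : ¬F v v) (huv : ¬F u v) (hvu : ¬F v u)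
    (f : W → V) : (∀ a b, F a b → E (f a) (f b)) ↔
      (∀ s t : OffPair u v, F s t → E (f s) (f t)) ∧
      (∀ s : OffPair u v, F u s → E (f u) (f s)) ∧ (∀ s : OffPair u v, F s u → E (f s) (f u)) ∧
      (∀ s : OffPair u v, F v s → E (f v) (f s)) ∧ (∀ s : OffPair u v, F s v → E (f s) (f v)) := by
  refine ⟨fun h => ⟨fun s t => h s t, fun s => h u s, fun s => h s u, fun s => h v s,
    fun s => h s v⟩, fun ⟨hst, hus, hsu, hvs, hsv⟩ a b hab => ?_⟩
  have ha := eq_or_eq_or_offPair (u := u) (v := v) a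
  have hb := eq_or_eq_or_offPair (u := u) (v := v) b
  rcases ha with rfl | rfl | ⟨s, rfl⟩ <;> rcases hb with rfl | rfl | ⟨t, rfl⟩
  all_goals first
    | contradiction | exact hst _ _ hab
    | exact hus _ hab | exact hsu _ hab | exact hvs _ hab | exact hsv _ hab

variable [Fintype V]

open Classical in
/-- Empty unless `g` is itself a copy of `F`; otherwise the images `x` of `a` for which `g`
together with `a ↦ x` is a copy of `F` on `OffPair u v ∪ {a}`. -/
noncomputable def extensionSet (g : OffPair u v → V) (a : W) : Finset V :=
  univ.filter fun x => IsCopy (fun s t : OffPair u v => F s t) E g ∧ (∀ s, g s ≠ x) ∧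
    (∀ s : OffPair u v, F a s → E x (g s)) ∧ ∀ s : OffPair u v, F s a → E (g s) x

lemma mem_extensionSet {g : OffPair u v → V} {a : W} {x : V} :
    x ∈ extensionSet F E g a ↔ IsCopy (fun s t : OffPair u v => F s t) E g ∧
      (∀ s, g s ≠ x) ∧ (∀ s : OffPair u v, F a s → E x (g s)) ∧
      ∀ s : OffPair u v, F s a → E (g s) x := by
  simp [extensionSet]

lemma isCopy_and_iff_mem_extensionSet (hu : ¬F u u) (hv : ¬F v v) (huv : ¬F u v)
    (hvu : ¬F v u) {R : V → V → Prop} (hR : ∀ x y, R x y → x ≠ y) (f : W → V) :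
    IsCopy F E f ∧ R (f u) (f v) ↔ f u ∈ extensionSet F E (fun s : OffPair u v => f s) u ∧
      f v ∈ extensionSet F E (fun s : OffPair u v => f s) v ∧ R (f u) (f v) := by
  by_cases hr : R (f u) (f v)
  · simp only [mem_extensionSet, IsCopy, hr, and_true,
      injective_iff_offPair (hR _ _ hr), map_rel_iff_offPair F E hu hv huv hvu]
    tauto
  · simp [hr]

lemma natCard_isCopy_and_eq_sum [DecidableEq W] [Fintype W] (hu : ¬F u u) (hv : ¬F v v)
    (huv : ¬F u v) (hvu : ¬F v u) (hne : u ≠ v) (R : V → V → Prop) [DecidableRel R]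
    (hR : ∀ x y, R x y → x ≠ y) :
    Nat.card {f : W → V // IsCopy F E f ∧ R (f u) (f v)} =
      ∑ g : OffPair u v → V,
        #((extensionSet F E g u ×ˢ extensionSet F E g v).filter fun p => R p.1 p.2) := by
  let P (g : OffPair u v → V) (p : V × V) :=
    p.1 ∈ extensionSet F E g u ∧ p.2 ∈ extensionSet F E g v ∧ R p.1 p.2
  rw [Nat.card_congr ((splitAtPair hne).subtypeEquiv (q := fun p => P p.1 p.2)
      (isCopy_and_iff_mem_extensionSet F E hu hv huv hvu hR)),
    Nat.card_congr (Equiv.subtypeProdEquivSigmaSubtype P), Nat.card_sigma]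
  exact Fintype.sum_congr _ _ fun g => Nat.subtype_card _ fun p => by simp [P, and_assoc]

end Copies

section Arcs

variable {W V : Type*}

def addArc (R : W → W → Prop) (p q : W) (a b : W) : Prop := R a b ∨ (a, b) = (p, q)

def deleteArc (R : W → W → Prop) (p q : W) (a b : W) : Prop := R a b ∧ (a, b) ≠ (p, q)

def reverseArc (R : W → W → Prop) (u v : W) : W → W → Prop := addArc (deleteArc R u v) v u

lemma isCopy_addArc_iff (F : W → W → Prop) (E : V → V → Prop) (p q : W) (f : W → V) :
    IsCopy (addArc F p q) E f ↔ IsCopy F E f ∧ E (f p) (f q) := by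
  simp [IsCopy, addArc, or_imp, forall_and, and_assoc]

lemma NL_eq_natCard_isCopy (F : W → W → Prop) (E : V → V → Prop) :
    NL F E = Nat.card {f : W → V // IsCopy F E f} :=
  Nat.card_congr
    { toFun f := ⟨f.1, f.1.injective, f.2⟩
      invFun f := ⟨⟨f.1, f.2.1⟩, f.2.2⟩ }

variable [Fintype W] [Fintype V] (F : W → W → Prop) (E : V → V → Prop) [DecidableRel E]
  {u v : W}

lemma abs_NL_addArc_sub_NL_addArc_le (hne : u ≠ v) (hu : ¬F u u) (hv : ¬F v v)
    (huv : ¬F u v) (hvu : ¬F v u) (hirr : ∀ x, ¬E x x) :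
    |(NL (addArc F u v) E : ℤ) - NL (addArc F v u) E| ≤
      Fintype.card V ^ (Fintype.card W - 2) * tau E := by
  classical
  have hE : ∀ x y, E x y → x ≠ y := fun x y h hxy => hirr x (hxy ▸ h)
  have h₁ : NL (addArc F u v) E =
      ∑ g : OffPair u v → V, eAB E (extensionSet F E g u) (extensionSet F E g v) := by
    simp only [NL_eq_natCard_isCopy, isCopy_addArc_iff]
    exact natCard_isCopy_and_eq_sum F E hu hv huv hvu hne E hE
  have h₂ : NL (addArc F v u) E =
      ∑ g : OffPair u v → V, eAB E (extensionSet F E g v) (extensionSet F E g u) := by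
    simp only [NL_eq_natCard_isCopy, isCopy_addArc_iff, ← card_filter_swap_eq_eAB]
    exact natCard_isCopy_and_eq_sum F E hu hv huv hvu hne (fun x y => E y x)
      fun x y h => (hE y x h).symm
  rw [h₁, h₂]
  push_cast
  calc _ ≤ ∑ g : OffPair u v → V, |(eAB E (extensionSet F E g u) (extensionSet F E g v) : ℤ) -
          eAB E (extensionSet F E g v) (extensionSet F E g u)| := by
        rw [← sum_sub_distrib]; exact abs_sum_le_sum_abs _ _
    _ ≤ ∑ _g : OffPair u v → V, tau E := sum_le_sum fun g _ => abs_sub_le_tau E _ _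
    _ = _ := by simp [card_offPair_fun hne]

end Arcs

section Reversal

variable {W : Type*} (R : W → W → Prop) {u v : W}

lemma addArc_deleteArc (h : R u v) : addArc (deleteArc R u v) u v = R := by
  funext a b
  simp only [addArc, deleteArc, eq_iff_iff]
  by_cases hab : (a, b) = (u, v) <;> simp_all

lemma asymm_reverseArc (hR : ∀ a b, ¬(R a b ∧ R b a)) (hne : u ≠ v) :
    ∀ a b, ¬(reverseArc R u v a b ∧ reverseArc R u v b a) := by
  simp only [reverseArc, addArc, deleteArc, Prod.mk.injEq]
  grind

lemma reverseArc_or_swap_iff (h : R u v) (a b : W) :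
    (reverseArc R u v a b ∨ reverseArc R u v b a) ↔ (R a b ∨ R b a) := by
  simp only [reverseArc, addArc, deleteArc, Prod.mk.injEq]
  grind

variable [Fintype W]

open Classical in
noncomputable def arcDiff (R R' : W → W → Prop) : Finset (W × W) :=
  univ.filter fun p => R p.1 p.2 ∧ ¬R' p.1 p.2

lemma arcDiff_reverseArc [DecidableEq W] {R' : W → W → Prop} (h : R' v u) :
    arcDiff (reverseArc R u v) R' = (arcDiff R R').erase (u, v) := by
  ext ⟨a, b⟩
  simp only [arcDiff, reverseArc, addArc, deleteArc, mem_erase, mem_filter, mem_univ, true_and,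
    Prod.mk.injEq]
  grind

lemma eq_of_arcDiff_eq_empty {R' : W → W → Prop} (hR' : ∀ a b, ¬(R' a b ∧ R' b a))
    (hsame : ∀ a b, (R a b ∨ R b a) ↔ (R' a b ∨ R' b a)) (h : arcDiff R R' = ∅) : R = R' := by
  have hsub : ∀ a b, R a b → R' a b := fun a b hab => by
    by_contra hn
    simpa [arcDiff, hab, hn] using congrArg ((a, b) ∈ ·) h
  funext a b
  exact propext ⟨hsub a b, fun h' => ((hsame a b).2 (.inl h')).resolve_right
    fun hba => hR' a b ⟨h', hsub b a hba⟩⟩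

end Reversal

section Main

variable {W V : Type*} [Fintype W] [Fintype V] {E : V → V → Prop} [DecidableRel E]

lemma abs_NL_sub_NL_reverseArc_le (hirr : ∀ x, ¬E x x) {R : W → W → Prop}
    (hR : ∀ a b, ¬(R a b ∧ R b a)) {u v : W} (huv : R u v) :
    |(NL R E : ℤ) - NL (reverseArc R u v) E| ≤
      Fintype.card V ^ (Fintype.card W - 2) * tau E := by
  have hirrR : ∀ a, ¬R a a := fun a h => hR a a ⟨h, h⟩
  have hne : u ≠ v := fun h => hirrR u (h ▸ huv)
  have := abs_NL_addArc_sub_NL_addArc_le (deleteArc R u v) E hne (fun h => hirrR u h.1)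
    (fun h => hirrR v h.1) (fun h => h.2 rfl) (fun h => hR u v ⟨huv, h.1⟩) hirr
  rwa [addArc_deleteArc R huv] at this

lemma abs_NL_sub_le_card_arcDiff_mul (hirr : ∀ x, ¬E x x) {R R' : W → W → Prop}
    (hR : ∀ a b, ¬(R a b ∧ R b a)) (hR' : ∀ a b, ¬(R' a b ∧ R' b a))
    (hsame : ∀ a b, (R a b ∨ R b a) ↔ (R' a b ∨ R' b a)) :
    |(NL R E : ℤ) - NL R' E| ≤
      #(arcDiff R R') * (Fintype.card V ^ (Fintype.card W - 2) * tau E) := by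
  classical
  induction h : #(arcDiff R R') generalizing R with
  | zero => simp [eq_of_arcDiff_eq_empty R hR' hsame (card_eq_zero.1 h)]
  | succ d ih =>
    obtain ⟨⟨u, v⟩, hmem⟩ : (arcDiff R R').Nonempty := card_pos.1 (h ▸ d.succ_pos)
    have huv : R u v ∧ ¬R' u v := by simpa [arcDiff] using hmem
    have hvu : R' v u := ((hsame u v).1 (.inl huv.1)).resolve_left huv.2
    have hne : u ≠ v := by
      rintro rfl
      exact huv.2 (((hsame u u).1 (.inl huv.1)).elim id id)
    have hrev := ih (asymm_reverseArc R hR hne)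
      (fun a b => (reverseArc_or_swap_iff R huv.1 a b).trans (hsame a b))
      (by rw [arcDiff_reverseArc R hvu, card_erase_of_mem hmem, h, Nat.add_sub_cancel])
    calc |(NL R E : ℤ) - NL R' E|
        ≤ |(NL R E : ℤ) - NL (reverseArc R u v) E| + |(NL (reverseArc R u v) E : ℤ) - NL R' E| :=
          abs_sub_le _ _ _
      _ ≤ _ := add_le_add (abs_NL_sub_NL_reverseArc_le hirr hR huv.1) hrev
      _ = _ := by push_cast; ring

end Main

theorem stmt6_general {W V : Type*} [Fintype W] [Fintype V]
    (EB EB' : W → W → Prop) [DecidableRel EB] (E : V → V → Prop) [DecidableRel E]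
    (hsame : ∀ a b, (EB a b ∨ EB b a) ↔ (EB' a b ∨ EB' b a))
    (horB : ∀ a b, ¬ (EB a b ∧ EB b a))
    (horB' : ∀ a b, ¬ (EB' a b ∧ EB' b a))
    (hirr : ∀ a, ¬ E a a) :
    |(NL EB E : ℤ) - (NL EB' E : ℤ)|
      ≤ (edgeCount EB : ℤ) * (Fintype.card V : ℤ) ^ (Fintype.card W - 2) * tau E := by
  have hc : (0 : ℤ) ≤ Fintype.card V ^ (Fintype.card W - 2) * tau E :=
    mul_nonneg (by positivity) (tau_nonneg E)
  have hD : #(arcDiff EB EB') ≤ edgeCount EB :=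
    card_le_card fun p hp => by simp_all [arcDiff]
  calc |(NL EB E : ℤ) - NL EB' E|
      ≤ #(arcDiff EB EB') * (Fintype.card V ^ (Fintype.card W - 2) * tau E) :=
        abs_NL_sub_le_card_arcDiff_mul hirr horB horB' hsame
    _ ≤ edgeCount EB * (Fintype.card V ^ (Fintype.card W - 2) * tau E) := by gcongr
    _ = _ := (mul_assoc _ _ _).symm

/-- if `B, B'` are digraphs with the same underlying undirected graph on `k`
vertices, then `|N_L(B,G) - N_L(B',G)| ≤ e(B) · n^(k-2) · τ(G)`. -/
theorem stmt6 {W V : Type*} [Fintype W] [DecidableEq W] [Fintype V] [DecidableEq V]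
    (EB EB' : W → W → Prop) [DecidableRel EB] (E : V → V → Prop) [DecidableRel E]
    (hsame : ∀ a b, (EB a b ∨ EB b a) ↔ (EB' a b ∨ EB' b a))
    (hirrB : ∀ a, ¬ EB a a) (horB : ∀ a b, ¬ (EB a b ∧ EB b a))
    (hirrB' : ∀ a, ¬ EB' a a) (horB' : ∀ a b, ¬ (EB' a b ∧ EB' b a))
    (hirr : ∀ a, ¬ E a a) (hor : ∀ a b, ¬ (E a b ∧ E b a)) :
    |(NL EB E : ℤ) - (NL EB' E : ℤ)|
      ≤ (edgeCount EB : ℤ) * (Fintype.card V : ℤ) ^ (Fintype.card W - 2) * tau E :=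
  stmt6_general EB EB' E hsame horB horB' hirr
end

section
/- Suppose G is a digraph with m edges such that every induced subgraph of G on k vertices contains at most m/2 edges. Then the sum over all vertices v of √(d(v)) is at least (1/4)·√(mk), where d(v) is the total degree (indegree plus outdegree) of v. -/
open Finset

/- Take `U` to be `k` vertices of largest degree. Every edge lies inside `U` or meets its
complement, so by hypothesis the degrees outside `U` add up to at least `m/2`. Each such
degree `d(v)` is at most `√d(v) √d(u)` for every `u ∈ U`; summing over `u` and `v` gives
`k m / 2 ≤ A B`, where `A` and `B` are the sums of `√d` over `U` and over its complement,
and `4 A B ≤ (A + B)²` finishes. -/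

lemma exists_card_eq_forall_le_of_notMem {V β : Type*} [Fintype V] [DecidableEq V]
    [LinearOrder β] (f : V → β) {k : ℕ} (hk : k ≤ Fintype.card V) :
    ∃ U : Finset V, #U = k ∧ ∀ u ∈ U, ∀ v ∉ U, f v ≤ f u := by
  induction k with
  | zero => exact ⟨∅, rfl, by simp⟩
  | succ n ih =>
    obtain ⟨U, hcard, hU⟩ := ih (Nat.le_of_succ_le hk)
    have hne : Uᶜ.Nonempty := by
      rw [← card_pos, card_compl, hcard]
      omega
    obtain ⟨w, hw, hw_max⟩ := exists_max_image Uᶜ f hne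
    have hwU : w ∉ U := mem_compl.1 hw
    refine ⟨insert w U, by rw [card_insert_of_notMem hwU, hcard], ?_⟩
    intro u hu v hv
    have hvU : v ∉ U := fun h => hv (mem_insert_of_mem h)
    rcases mem_insert.1 hu with rfl | hu
    · exact hw_max v (mem_compl.2 hvU)
    · exact hU u hu v hvU

lemma edgeCount_le_eAB_add_sum_deg {V : Type*} [Fintype V] [DecidableEq V]
    (E : V → V → Prop) [DecidableRel E] (U : Finset V) :
    edgeCount E ≤ eAB E U U + ∑ v ∈ Uᶜ, (inDeg E v + outDeg E v) := by
  have hcover : univ.filter (fun p : V × V => E p.1 p.2) ⊆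
      (U ×ˢ U).filter (fun p => E p.1 p.2) ∪ Uᶜ.biUnion fun v =>
        (univ.filter fun w => E w v).image (·, v) ∪ (univ.filter fun w => E v w).image (v, ·) := by
    rintro ⟨a, b⟩ hab
    have hE : E a b := (mem_filter.1 hab).2
    refine mem_union.2 ?_
    by_cases ha : a ∈ U
    · by_cases hb : b ∈ U
      · exact .inl (mem_filter.2 ⟨mem_product.2 ⟨ha, hb⟩, hE⟩)
      · exact .inr <| mem_biUnion.2 ⟨b, mem_compl.2 hb,
          mem_union_left _ (mem_image.2 ⟨a, mem_filter.2 ⟨mem_univ _, hE⟩, rfl⟩)⟩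
    · exact .inr <| mem_biUnion.2 ⟨a, mem_compl.2 ha,
        mem_union_right _ (mem_image.2 ⟨b, mem_filter.2 ⟨mem_univ _, hE⟩, rfl⟩)⟩
  calc edgeCount E
      ≤ eAB E U U + ∑ v ∈ Uᶜ, #((univ.filter fun w => E w v).image (·, v) ∪
          (univ.filter fun w => E v w).image (v, ·)) :=
        (card_le_card hcover).trans <| (card_union_le _ _).trans <|
          Nat.add_le_add_left card_biUnion_le _
    _ ≤ eAB E U U + ∑ v ∈ Uᶜ, (inDeg E v + outDeg E v) := by
        gcongr with v
        exact (card_union_le _ _).trans (add_le_add card_image_le card_image_le)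

lemma card_mul_sum_sq_le_sum_mul_sum {ι : Type*} (s t : Finset ι) (f : ι → ℝ)
    (hf₀ : ∀ v ∈ t, 0 ≤ f v) (hf : ∀ u ∈ s, ∀ v ∈ t, f v ≤ f u) :
    (#s : ℝ) * ∑ v ∈ t, f v ^ 2 ≤ (∑ u ∈ s, f u) * ∑ v ∈ t, f v := by
  rw [mul_sum, mul_sum]
  refine sum_le_sum fun v hv => ?_
  rw [← nsmul_eq_mul, ← sum_const, sum_mul]
  refine sum_le_sum fun u hu => ?_
  rw [sq]
  exact mul_le_mul_of_nonneg_right (hf u hu v hv) (hf₀ v hv)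

/-- if every induced subgraph on `k` vertices has at most `m/2` edges, then
`∑_v √(d(v)) ≥ (1/4)√(mk)`. -/
theorem stmt7 {V : Type*} [Fintype V] [DecidableEq V] (E : V → V → Prop) [DecidableRel E]
    (k m : ℕ) (hm : edgeCount E = m) (hk : k ≤ Fintype.card V)
    (hind : ∀ U : Finset V, U.card = k → 2 * eAB E U U ≤ m) :
    (1 / 4 : ℝ) * Real.sqrt ((m : ℝ) * (k : ℝ))
      ≤ ∑ v : V, Real.sqrt ((inDeg E v : ℝ) + (outDeg E v : ℝ)) := by
  set f : V → ℝ := fun v => Real.sqrt ((inDeg E v : ℝ) + (outDeg E v : ℝ))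
  have hf_sq (v : V) : f v ^ 2 = inDeg E v + outDeg E v := Real.sq_sqrt (by positivity)
  obtain ⟨U, hUk, hU⟩ := exists_card_eq_forall_le_of_notMem (fun v => inDeg E v + outDeg E v) hk
  have hm_le : (m : ℝ) ≤ 2 * ∑ v ∈ Uᶜ, f v ^ 2 := by
    have hcount := edgeCount_le_eAB_add_sum_deg E U
    have hinside := hind U hUk
    simp only [hf_sq]
    exact_mod_cast (by omega : m ≤ 2 * ∑ v ∈ Uᶜ, (inDeg E v + outDeg E v))
  have hkm : (k : ℝ) * ∑ v ∈ Uᶜ, f v ^ 2 ≤ (∑ u ∈ U, f u) * ∑ v ∈ Uᶜ, f v := by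
    rw [← hUk]
    refine card_mul_sum_sq_le_sum_mul_sum U Uᶜ f (fun v _ => Real.sqrt_nonneg _)
      fun u hu v hv => Real.sqrt_le_sqrt ?_
    exact_mod_cast hU u hu v (mem_compl.1 hv)
  have hsplit : ∑ v, f v = ∑ u ∈ U, f u + ∑ v ∈ Uᶜ, f v := (sum_add_sum_compl U f).symm
  have hS : 0 ≤ ∑ v, f v := sum_nonneg fun v _ => Real.sqrt_nonneg _
  have hsqrt : Real.sqrt ((m : ℝ) * k) ≤ ∑ v, f v := by
    refine Real.sqrt_le_iff.2 ⟨hS, ?_⟩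
    rw [hsplit]
    nlinarith [sq_nonneg (∑ u ∈ U, f u - ∑ v ∈ Uᶜ, f v), (Nat.cast_nonneg k : (0 : ℝ) ≤ k)]
  linarith [Real.sqrt_nonneg ((m : ℝ) * k)]
end

section
/- If G = (V, E) is a graph with m edges, then the sum over all vertices v of √(d(v)) is at least (1/4)·m^{3/4}. -/
open Finset

/-!
Split the vertices at a degree threshold `t²`, and let `s = ∑ √d(v)`. A low vertex has
`d(v) ≤ t √d(v)`, so low vertices carry at most `t s` of the degree sum. There are at most
`s / t` high vertices, and counting their degrees from the other end of each edge gives at most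
`∑_u min(d(u), #high) ≤ ∑_u √(d(u) · #high) ≤ s √(s / t)`. Hence `2m ≤ t s + s √(s / t)`, and
`t = s^(1/3)` gives `m ≤ s^(4/3)`.
-/

theorem Real.le_sqrt_mul_of_le_of_le {x a b : ℝ} (hx : 0 ≤ x) (ha : x ≤ a) (hb : x ≤ b) :
    x ≤ √(a * b) :=
  Real.le_sqrt_of_sq_le (by nlinarith)

theorem Finset.sum_le_mul_sum_sqrt {ι : Type*} (s : Finset ι) (f : ι → ℝ) {t : ℝ}
    (hf : ∀ i ∈ s, 0 ≤ f i) (ht : ∀ i ∈ s, √(f i) ≤ t) :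
    ∑ i ∈ s, f i ≤ t * ∑ i ∈ s, √(f i) := by
  rw [Finset.mul_sum]
  refine Finset.sum_le_sum fun i hi => ?_
  calc f i = √(f i) * √(f i) := (Real.mul_self_sqrt (hf i hi)).symm
    _ ≤ t * √(f i) := mul_le_mul_of_nonneg_right (ht i hi) (Real.sqrt_nonneg _)

namespace SimpleGraph

variable {V : Type*} [Fintype V] (G : SimpleGraph V) [DecidableRel G.Adj]

theorem sum_degree_eq_sum_card_filter_adj (H : Finset V) :
    ∑ v ∈ H, G.degree v = ∑ u, #{v ∈ H | G.Adj u v} := by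
  have := sum_card_bipartiteAbove_eq_sum_card_bipartiteBelow (s := H) (t := univ) G.Adj
  simp only [bipartiteAbove, bipartiteBelow] at this
  simp_rw [degree, neighborFinset_eq_filter, this, G.adj_comm]

theorem sum_degree_le_sqrt_card_mul_sum_sqrt_degree (H : Finset V) :
    ∑ v ∈ H, (G.degree v : ℝ) ≤ √(#H : ℝ) * ∑ u, √(G.degree u : ℝ) := by
  have hcard (u : V) : (#{v ∈ H | G.Adj u v} : ℝ) ≤ √(G.degree u * #H : ℝ) := by
    refine Real.le_sqrt_mul_of_le_of_le (Nat.cast_nonneg _) ?_ ?_ <;> norm_cast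
    · exact card_le_card fun v hv => by simpa using (mem_filter.mp hv).2
    · exact card_filter_le _ _
  calc ∑ v ∈ H, (G.degree v : ℝ) = ∑ u, (#{v ∈ H | G.Adj u v} : ℝ) := by
        exact_mod_cast G.sum_degree_eq_sum_card_filter_adj H
    _ ≤ ∑ u, √(G.degree u * #H : ℝ) := sum_le_sum fun u _ => hcard u
    _ = √(#H : ℝ) * ∑ u, √(G.degree u : ℝ) := by
        simp_rw [mul_sum, Real.sqrt_mul (Nat.cast_nonneg _), mul_comm]

theorem two_mul_card_edgeFinset_le {t : ℝ} (ht : 0 < t) :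
    2 * (#G.edgeFinset : ℝ) ≤
      t * ∑ v, √(G.degree v : ℝ) + (∑ v, √(G.degree v : ℝ)) * √((∑ v, √(G.degree v : ℝ)) / t) := by
  set s := ∑ v, √(G.degree v : ℝ)
  have hsub (H : Finset V) : ∑ v ∈ H, √(G.degree v : ℝ) ≤ s :=
    sum_le_sum_of_subset_of_nonneg (subset_univ _) fun _ _ _ => Real.sqrt_nonneg _
  set H : Finset V := {v | t ≤ √(G.degree v : ℝ)}
  have hH : #H * t ≤ s := by
    calc #H * t = #H • t := (nsmul_eq_mul _ _).symm
      _ ≤ ∑ v ∈ H, √(G.degree v : ℝ) := card_nsmul_le_sum _ _ _ fun v hv => (mem_filter.mp hv).2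
      _ ≤ s := hsub H
  have hhigh : ∑ v ∈ H, (G.degree v : ℝ) ≤ s * √(s / t) := by
    calc ∑ v ∈ H, (G.degree v : ℝ) ≤ √(#H : ℝ) * s :=
          G.sum_degree_le_sqrt_card_mul_sum_sqrt_degree H
      _ ≤ √(s / t) * s := by gcongr; rwa [le_div_iff₀ ht]
      _ = s * √(s / t) := mul_comm _ _
  have hlow : ∑ v with ¬t ≤ √(G.degree v : ℝ), (G.degree v : ℝ) ≤ t * s := by
    calc ∑ v with ¬t ≤ √(G.degree v : ℝ), (G.degree v : ℝ)
        ≤ t * ∑ v with ¬t ≤ √(G.degree v : ℝ), √(G.degree v : ℝ) :=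
          sum_le_mul_sum_sqrt _ _ (fun _ _ => Nat.cast_nonneg _)
            fun _ hv => (not_le.mp (mem_filter.mp hv).2).le
      _ ≤ t * s := by gcongr; exact hsub _
  calc 2 * (#G.edgeFinset : ℝ) = ∑ v, (G.degree v : ℝ) := by
        exact_mod_cast G.sum_degrees_eq_twice_card_edges.symm
    _ = ∑ v ∈ H, (G.degree v : ℝ) + ∑ v with ¬t ≤ √(G.degree v : ℝ), (G.degree v : ℝ) :=
        (sum_filter_add_sum_filter_not _ _ _).symm
    _ ≤ t * s + s * √(s / t) := by linarith

theorem card_edgeFinset_le_sum_sqrt_degree_rpow :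
    (#G.edgeFinset : ℝ) ≤ (∑ v, √(G.degree v : ℝ)) ^ (4 / 3 : ℝ) := by
  have hs : 0 ≤ ∑ v, √(G.degree v : ℝ) := sum_nonneg fun v _ => Real.sqrt_nonneg _
  have key {t : ℝ} (ht : 0 < t) := G.two_mul_card_edgeFinset_le ht
  generalize ∑ v, √(G.degree v : ℝ) = s at hs key ⊢
  rcases hs.eq_or_lt with rfl | hs
  · have := key one_pos
    rw [Real.zero_rpow (by norm_num)]
    simp only [zero_div, Real.sqrt_zero, mul_zero, add_zero] at this
    linarith
  · have hcube : s / s ^ (1 / 3 : ℝ) = (s ^ (1 / 3 : ℝ)) ^ 2 := by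
      rw [div_eq_iff (Real.rpow_pos_of_pos hs _).ne', ← pow_succ, ← Real.rpow_natCast,
        ← Real.rpow_mul hs.le]
      norm_num
    have h43 : s ^ (4 / 3 : ℝ) = s ^ (1 / 3 : ℝ) * s := by
      rw [show (4 / 3 : ℝ) = 1 / 3 + 1 by norm_num, Real.rpow_add hs, Real.rpow_one]
    have := key (Real.rpow_pos_of_pos hs (1 / 3))
    rw [hcube, Real.sqrt_sq (Real.rpow_nonneg hs.le _)] at this
    linarith

end SimpleGraph

theorem stmt8_general {V : Type*} [Fintype V] (G : SimpleGraph V) [DecidableRel G.Adj] :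
    (1 / 4 : ℝ) * (G.edgeFinset.card : ℝ) ^ ((3 : ℝ) / 4)
      ≤ ∑ v : V, Real.sqrt (G.degree v : ℝ) := by
  have hs : 0 ≤ ∑ v : V, Real.sqrt (G.degree v : ℝ) := sum_nonneg fun v _ => Real.sqrt_nonneg _
  have hm : (0 : ℝ) ≤ (G.edgeFinset.card : ℝ) ^ ((3 : ℝ) / 4) := by positivity
  calc (1 / 4 : ℝ) * (G.edgeFinset.card : ℝ) ^ ((3 : ℝ) / 4)
      ≤ (G.edgeFinset.card : ℝ) ^ ((3 : ℝ) / 4) := by linarith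
    _ ≤ ((∑ v : V, Real.sqrt (G.degree v : ℝ)) ^ (4 / 3 : ℝ)) ^ ((3 : ℝ) / 4) := by
        gcongr
        exact G.card_edgeFinset_le_sum_sqrt_degree_rpow
    _ = ∑ v : V, Real.sqrt (G.degree v : ℝ) := by
        rw [← Real.rpow_mul hs]
        norm_num

/-- for a graph with `m` edges, `∑_v √(d(v)) ≥ (1/4) m^(3/4)`. -/
theorem stmt8 {V : Type*} [Fintype V] [DecidableEq V] (G : SimpleGraph V) [DecidableRel G.Adj] :
    (1 / 4 : ℝ) * (G.edgeFinset.card : ℝ) ^ ((3 : ℝ) / 4)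
      ≤ ∑ v : V, Real.sqrt (G.degree v : ℝ) :=
  stmt8_general G
end

section
/- For any integer r ≥ 3 and any n that is a multiple of r+1, the balanced blowup of the directed (r+1)-cycle on n vertices is a digraph G containing no directed cycle of length at most r, and β(G) = n²/(r+1)². -/
open Finset

/-! The layer index in `Fin (r + 1)` goes up by one along every arc, so every directed cycle has
length divisible by `r + 1`. Deleting the `t²` arcs from the last layer to the first leaves an
acyclic digraph, since the layer index read in `ℕ` then increases strictly along every arc.
Conversely, each of the `t ^ (r + 1)` transversals `i ↦ (i, a i)` is a directed `(r + 1)`-cycle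
and every arc lies on just `t ^ (r - 1)` of them, so a feedback arc set has at least `t²` arcs. -/

section Digraph

variable {V : Type*} {E : V → V → Prop}

theorem hasDirCycleLen_of_adj_add_one {m : ℕ} (v : Fin (m + 1) → V)
    (hv : ∀ i, E (v i) (v (i + 1))) : hasDirCycleLen E (m + 1) := by
  refine ⟨m.succ_pos, v, fun i ↦ ?_⟩
  convert hv i using 3
  simp [Fin.val_add]

theorem natCast_eq_zero_of_hasDirCycleLen {G : Type*} [AddGroupWithOne G] (f : V → G)
    (hf : ∀ a b, E a b → f b = f a + 1) {l : ℕ} (h : hasDirCycleLen E l) : (l : G) = 0 := by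
  obtain ⟨hl, v, hv⟩ := h
  have walk : ∀ k : ℕ, f (v ⟨k % l, Nat.mod_lt _ hl⟩) = f (v ⟨0, hl⟩) + k := by
    intro k
    induction k with
    | zero => simp [Nat.zero_mod]
    | succ k ih =>
      have step := hf _ _ (hv ⟨k % l, Nat.mod_lt _ hl⟩)
      simp only [Nat.mod_add_mod] at step
      rw [step, ih, Nat.cast_succ, add_assoc]
  simpa using walk l

theorem not_hasDirCycle_of_lt {β : Type*} [LinearOrder β] (f : V → β)
    (hf : ∀ a b, E a b → f a < f b) : ¬ hasDirCycle E := by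
  rintro ⟨l, hl, v, hv⟩
  obtain ⟨i, -, hmax⟩ := exists_max_image univ (f ∘ v) ⟨⟨0, hl⟩, mem_univ _⟩
  exact (hf _ _ (hv i)).not_ge (hmax _ (mem_univ _))

theorem beta_eq_card_of_isFAS {S : Finset (V × V)} (hS : IsFAS E S)
    (hmin : ∀ T, IsFAS E T → #S ≤ #T) : beta E = #S :=
  le_antisymm (Nat.sInf_le ⟨S, hS, rfl⟩) (le_csInf ⟨_, S, hS, rfl⟩ (by grind))

end Digraph

theorem Fintype.card_filter_apply_eq_and_apply_eq {ι α : Type*} [Fintype ι] [DecidableEq ι]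
    [Fintype α] [DecidableEq α] {i j : ι} (hij : i ≠ j) (x y : α) :
    #{f : ι → α | f i = x ∧ f j = y} = Fintype.card α ^ (Fintype.card ι - 2) := by
  set s := Function.update (Function.update (fun _ ↦ (univ : Finset α)) i {x}) j {y}
  have hs : ({f : ι → α | f i = x ∧ f j = y} : Finset (ι → α)) = Fintype.piFinset s := by
    ext f
    simp only [s, mem_filter, mem_univ, true_and, Fintype.mem_piFinset]
    grind
  have hcard : ∀ k, #(s k) = if k ∈ ({i, j} : Finset ι) then 1 else Fintype.card α := by
    intro k
    by_cases hk : k = j <;> by_cases hk' : k = i <;> simp_all [s]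
  rw [hs, Fintype.card_piFinset]
  simp only [hcard, prod_ite, prod_const_one, one_mul, prod_const]
  rw [filter_not, card_sdiff_of_subset (subset_univ _), filter_mem_eq_inter, univ_inter,
    card_univ, card_pair hij]

def cycleBlowup (r t : ℕ) (p q : Fin (r + 1) × Fin t) : Prop := q.1 = p.1 + 1

namespace cycleBlowup

variable {r t : ℕ}

open Fin.CommRing in
theorem not_hasDirCycleLen {l : ℕ} (hlr : l ≤ r) : ¬ hasDirCycleLen (cycleBlowup r t) l := by
  intro h
  have hdvd : r + 1 ∣ l :=
    Fin.natCast_eq_zero.mp (natCast_eq_zero_of_hasDirCycleLen (G := Fin (r + 1)) Prod.fst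
      (fun _ _ h ↦ h) h)
  have := Nat.le_of_dvd h.1 hdvd
  omega

def wrapArcs (r t : ℕ) : Finset ((Fin (r + 1) × Fin t) × (Fin (r + 1) × Fin t)) :=
  ({Fin.last r} ×ˢ univ) ×ˢ ({0} ×ˢ univ)

theorem card_wrapArcs : #(wrapArcs r t) = t ^ 2 := by
  simp [wrapArcs, sq]

theorem isFAS_wrapArcs : IsFAS (cycleBlowup r t) (wrapArcs r t) := by
  constructor
  · rintro ⟨⟨i, _⟩, ⟨j, _⟩⟩ he
    simp only [wrapArcs, mem_product, mem_singleton] at he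
    simp [cycleBlowup, he.1.1, he.2.1]
  · refine not_hasDirCycle_of_lt (fun p ↦ p.1) fun ⟨i, _⟩ ⟨j, _⟩ ⟨hij, hS⟩ ↦ ?_
    simp only [cycleBlowup] at hij
    subst hij
    have : i ≠ Fin.last r := by
      rintro rfl
      simp [wrapArcs] at hS
    exact Fin.lt_add_one_iff.mpr (Fin.lt_last_iff_ne_last.mpr this)

theorem sq_le_card_of_isFAS (hr : 1 ≤ r)
    {S : Finset ((Fin (r + 1) × Fin t) × (Fin (r + 1) × Fin t))}
    (hS : IsFAS (cycleBlowup r t) S) : t ^ 2 ≤ #S := by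
  rcases Nat.eq_zero_or_pos t with rfl | ht
  · simp
  let through (e : (Fin (r + 1) × Fin t) × (Fin (r + 1) × Fin t)) :
      Finset (Fin (r + 1) → Fin t) :=
    {a | a e.1.1 = e.1.2 ∧ a e.2.1 = e.2.2}
  have hcover : univ ⊆ S.biUnion through := by
    intro a _
    by_contra ha
    exact hS.2 ⟨r + 1, hasDirCycleLen_of_adj_add_one (fun i ↦ (i, a i))
      fun i ↦ ⟨rfl, fun hi ↦ ha (mem_biUnion.mpr ⟨_, hi, by simp [through]⟩)⟩⟩
  have hthrough : ∀ e ∈ S, #(through e) = t ^ (r - 1) := by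
    intro e he
    have hne : e.1.1 ≠ e.2.1 := by
      rw [hS.1 e he]
      exact fun h ↦ Fin.one_eq_zero_iff.not.mpr (by omega) (left_eq_add.mp h)
    simpa using Fintype.card_filter_apply_eq_and_apply_eq hne e.1.2 e.2.2
  have hcount : t ^ 2 * t ^ (r - 1) ≤ #S * t ^ (r - 1) :=
    calc t ^ 2 * t ^ (r - 1) = #(univ : Finset (Fin (r + 1) → Fin t)) := by
          rw [← pow_add, card_univ, Fintype.card_fun, Fintype.card_fin, Fintype.card_fin]
          congr 1
          omega
      _ ≤ #(S.biUnion through) := card_le_card hcover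
      _ ≤ #S * t ^ (r - 1) := card_biUnion_le_card_mul _ _ _ fun e he ↦ (hthrough e he).le
  exact Nat.le_of_mul_le_mul_right hcount (by positivity)

theorem beta_eq (hr : 1 ≤ r) : beta (cycleBlowup r t) = t ^ 2 := by
  rw [beta_eq_card_of_isFAS isFAS_wrapArcs, card_wrapArcs]
  exact fun T hT ↦ card_wrapArcs.trans_le (sq_le_card_of_isFAS hr hT)

end cycleBlowup

/-- for `r ≥ 3` and `(r+1) ∣ n`, the balanced blowup of the directed
`(r+1)`-cycle on `n` vertices has no directed cycle of length at most `r`, and its minimum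
feedback arc set has size exactly `n²/(r+1)²`. -/
theorem stmt12 (r n : ℕ) (hr : 3 ≤ r) (hn : (r + 1) ∣ n) :
    (∀ l : ℕ, 1 ≤ l → l ≤ r →
      ¬ hasDirCycleLen (fun p q : Fin (r + 1) × Fin (n / (r + 1)) => q.1 = p.1 + 1) l)
    ∧ beta (fun p q : Fin (r + 1) × Fin (n / (r + 1)) => q.1 = p.1 + 1)
        = n ^ 2 / (r + 1) ^ 2 := by
  obtain ⟨t, rfl⟩ := hn
  have hpart : (r + 1) * t / (r + 1) = t := Nat.mul_div_cancel_left _ r.succ_pos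
  have hsq : ((r + 1) * t) ^ 2 / (r + 1) ^ 2 = t ^ 2 := by
    rw [mul_pow, Nat.mul_div_cancel_left _ (by positivity)]
  rw [hpart, hsq]
  exact ⟨fun _ _ hlr ↦ cycleBlowup.not_hasDirCycleLen hlr, cycleBlowup.beta_eq (by omega)⟩
end

section
/- For every n that is a multiple of 3, there exists a digraph G on n = 3N vertices with no directed cycle of length less than 2N (i.e., G is (2N−1)-free) such that β(G) = 2. -/
open Finset

/-!
Send u_i, v_i to 2i and w_i to 2i + 1 in ℤ/2N. Every edge raises this level by one, so a directed
cycle has length divisible by 2N, and a cycle passes through every level. Removing the two edges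
leaving w_0, the only vertex of level 1, therefore destroys all cycles; on the other hand the
cycles u_0 w_0 u_1 w_1 … and v_0 w_0 v_1 w_1 … share no edge, so at least two edges must go.
-/

def IsHomToDirCycle {V : Type*} {m : ℕ} (E : V → V → Prop) (φ : V → ZMod m) : Prop :=
  ∀ a b, E a b → φ b = φ a + 1

section FeedbackArcSets

variable {V : Type*} {E : V → V → Prop}

theorem beta_eq_of_isFAS_of_forall_le {k : ℕ} {S : Finset (V × V)} (hS : IsFAS E S)
    (hSk : S.card ≤ k) (hle : ∀ T, IsFAS E T → k ≤ T.card) : beta E = k := by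
  have hSk' : S.card = k := le_antisymm hSk (hle S hS)
  refine le_antisymm (Nat.sInf_le ⟨S, hS, hSk'⟩) (le_csInf ⟨k, S, hS, hSk'⟩ ?_)
  rintro _ ⟨T, hT, rfl⟩
  exact hle T hT

theorem hasDirCycleLen_of_closedWalk {m : ℕ} [NeZero m] (s : ZMod m → V)
    (hs : ∀ x, E (s x) (s (x + 1))) : hasDirCycleLen E m := by
  refine ⟨Nat.pos_of_neZero m, fun i => s i.1, fun i => ?_⟩
  simpa only [ZMod.natCast_mod, Nat.cast_succ] using hs i.1

theorem IsFAS.exists_mem_of_closedWalk {m : ℕ} [NeZero m] {S : Finset (V × V)} (hS : IsFAS E S)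
    {s : ZMod m → V} (hs : ∀ x, E (s x) (s (x + 1))) : ∃ x, (s x, s (x + 1)) ∈ S := by
  by_contra! h
  exact hS.2 ⟨m, hasDirCycleLen_of_closedWalk s fun x => ⟨hs x, h x⟩⟩

theorem two_le_card_of_isFAS {m : ℕ} [NeZero m] {s₁ s₂ : ZMod m → V}
    (hs₁ : ∀ x, E (s₁ x) (s₁ (x + 1))) (hs₂ : ∀ x, E (s₂ x) (s₂ (x + 1)))
    (hdisj : ∀ x y, (s₁ x, s₁ (x + 1)) ≠ (s₂ y, s₂ (y + 1)))
    {S : Finset (V × V)} (hS : IsFAS E S) : 2 ≤ S.card := by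
  obtain ⟨x, hx⟩ := hS.exists_mem_of_closedWalk hs₁
  obtain ⟨y, hy⟩ := hS.exists_mem_of_closedWalk hs₂
  exact Finset.one_lt_card.mpr ⟨_, hx, _, hy, hdisj x y⟩

end FeedbackArcSets

section HomToDirCycle

variable {V : Type*} {E : V → V → Prop} {m : ℕ} {φ : V → ZMod m}

theorem IsHomToDirCycle.apply_cycle (hφ : IsHomToDirCycle E φ) {l : ℕ} (hl : 0 < l)
    {v : Fin l → V} (hv : ∀ i : Fin l, E (v i) (v ⟨(i.1 + 1) % l, Nat.mod_lt _ hl⟩)) (k : ℕ) :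
    φ (v ⟨k % l, Nat.mod_lt _ hl⟩) = φ (v ⟨0, hl⟩) + k := by
  induction k with
  | zero => simp
  | succ k ih =>
    have hstep := hφ _ _ (hv ⟨k % l, Nat.mod_lt _ hl⟩)
    simp only [Nat.mod_add_mod] at hstep
    rw [hstep, ih, Nat.cast_succ, add_assoc]

theorem IsHomToDirCycle.dvd_of_hasDirCycleLen (hφ : IsHomToDirCycle E φ) {l : ℕ}
    (h : hasDirCycleLen E l) : m ∣ l := by
  obtain ⟨hl, v, hv⟩ := h
  have hround := hφ.apply_cycle hl hv l
  simp only [Nat.mod_self, left_eq_add] at hround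
  exact (ZMod.natCast_eq_zero_iff l m).mp hround

theorem IsHomToDirCycle.not_hasDirCycle [NeZero m] (hφ : IsHomToDirCycle E φ) (c : ZMod m)
    (hc : ∀ a b, E a b → φ a ≠ c) : ¬ hasDirCycle E := by
  rintro ⟨l, hl, v, hv⟩
  set k := (c - φ (v ⟨0, hl⟩)).val
  have hk : φ (v ⟨k % l, Nat.mod_lt _ hl⟩) = c := by
    rw [hφ.apply_cycle hl hv k, ZMod.natCast_zmod_val, add_sub_cancel]
  exact hc _ _ (hv _) hk

end HomToDirCycle

namespace DoubledCycle

variable (N : ℕ)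

/-- `(i, 0)`, `(i, 1)`, `(i, 2)` stand for `u_i`, `v_i`, `w_i`, at levels `2i`, `2i`, `2i + 1`. -/
def level (p : Fin N × Fin 3) : ZMod (2 * N) :=
  ((2 * p.1.val + if p.2 = 2 then 1 else 0 : ℕ) : ZMod (2 * N))

/-- The edges `(u_i, w_i)`, `(v_i, w_i)`, `(w_i, u_{i+1})`, `(w_i, v_{i+1})` are exactly the
pairs going up one level. -/
def adj (a b : Fin N × Fin 3) : Prop := level N b = level N a + 1

theorem isHomToDirCycle_level : IsHomToDirCycle (adj N) (level N) := fun _ _ h => h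

theorem snd_ne_two_of_adj {a b : Fin N × Fin 3} (h : adj N a b) (ha : a.2 = 2) : b.2 ≠ 2 := by
  intro hb
  simp only [adj, level, ha, hb, if_true, ← Nat.cast_succ, ZMod.natCast_eq_natCast_iff] at h
  have := Nat.ModEq.of_mul_right N h
  unfold Nat.ModEq at this
  omega

variable [NeZero N]

/-- `walk N 0` is the cycle `u_0 w_0 u_1 w_1 …`, `walk N 1` is `v_0 w_0 v_1 w_1 …`. -/
def walk (t : Fin 3) (x : ZMod (2 * N)) : Fin N × Fin 3 :=
  (⟨x.val / 2, by have := x.val_lt; omega⟩, if x.val % 2 = 0 then t else 2)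

theorem walk_level (p : Fin N × Fin 3) : walk N p.2 (level N p) = p := by
  have hlt : 2 * p.1.val + (if p.2 = 2 then 1 else 0) < 2 * N := by
    have := p.1.isLt
    split <;> omega
  ext
  · simp only [walk, level, ZMod.val_natCast, Nat.mod_eq_of_lt hlt]
    split <;> omega
  · simp only [walk, level, ZMod.val_natCast, Nat.mod_eq_of_lt hlt]
    split <;> simp_all

theorem level_walk {t : Fin 3} (ht : t ≠ 2) (x : ZMod (2 * N)) : level N (walk N t x) = x := by
  conv_rhs => rw [← ZMod.natCast_zmod_val x]
  unfold level walk
  congr 1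
  split <;> simp_all <;> omega

theorem adj_walk {t : Fin 3} (ht : t ≠ 2) (x : ZMod (2 * N)) :
    adj N (walk N t x) (walk N t (x + 1)) := by
  simp only [adj, level_walk N ht]

theorem walk_snd (t : Fin 3) (x : ZMod (2 * N)) : (walk N t x).2 = t ∨ (walk N t x).2 = 2 := by
  unfold walk
  split <;> simp

theorem walk_one_snd (t : Fin 3) : (walk N t 1).2 = 2 := by
  have h1 : (1 : ZMod (2 * N)).val = 1 :=
    (ZMod.val_one_eq_one_mod _).trans (Nat.mod_eq_of_lt (by have := NeZero.ne N; omega))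
  simp [walk, h1]

theorem walk_disjoint (x y : ZMod (2 * N)) :
    (walk N 0 x, walk N 0 (x + 1)) ≠ (walk N 1 y, walk N 1 (y + 1)) := by
  intro h
  have hsnd : ∀ z w, walk N 0 z = walk N 1 w → (walk N 0 z).2 = 2 := fun z w hzw => by
    rcases walk_snd N 0 z with h0 | h0
    · rcases walk_snd N 1 w with h1 | h1 <;> rw [hzw, h1] at h0 <;> exact absurd h0 (by decide)
    · exact h0
  obtain ⟨hx, hx1⟩ := Prod.ext_iff.mp h
  exact snd_ne_two_of_adj N (adj_walk N (by decide) x) (hsnd _ _ hx) (hsnd _ _ hx1)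

/-- The two edges leaving `w_0`. -/
def cut : Finset ((Fin N × Fin 3) × (Fin N × Fin 3)) :=
  ({0, 1} : Finset (Fin 3)).image fun t => (walk N t 1, walk N t (1 + 1))

theorem isFAS_cut : IsFAS (adj N) (cut N) := by
  refine ⟨?_, ?_⟩
  · simp only [cut, Finset.mem_image, Finset.mem_insert, Finset.mem_singleton]
    rintro _ ⟨t, ht, rfl⟩
    exact adj_walk N (by rcases ht with rfl | rfl <;> decide) 1
  · refine IsHomToDirCycle.not_hasDirCycle (φ := level N) (fun _ _ h => h.1) 1 ?_
    rintro a b ⟨hab, hnot⟩ ha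
    have hb2 : b.2 ≠ 2 := snd_ne_two_of_adj N hab (by rw [← walk_level N a, ha, walk_one_snd])
    apply hnot
    rw [← walk_level N a, ← walk_level N b, hab, ha]
    refine Finset.mem_image.mpr ⟨b.2, ?_, ?_⟩
    · have := b.2.isLt
      simp only [Finset.mem_insert, Finset.mem_singleton, Fin.ext_iff] at hb2 ⊢
      omega
    · rw [Prod.ext_iff]
      exact ⟨Prod.ext rfl (by rw [walk_one_snd, walk_one_snd]), rfl⟩

theorem beta_adj : beta (adj N) = 2 :=
  beta_eq_of_isFAS_of_forall_le (isFAS_cut N) (Finset.card_image_le.trans (by decide))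
    fun _ hT => two_le_card_of_isFAS (adj_walk N (by decide)) (adj_walk N (by decide))
      (walk_disjoint N) hT

end DoubledCycle

/-- for every `n = 3N` there is a digraph on `n` vertices with no directed
cycle of length less than `2N` (i.e. it is `(2N-1)`-free) whose minimum feedback arc set has
size exactly `2`. -/
theorem stmt14 (N : ℕ) (hN : 1 ≤ N) :
    ∃ (V : Type) (i1 : Fintype V) (i2 : DecidableEq V) (E : V → V → Prop),
      Fintype.card V = 3 * N ∧
      (∀ l : ℕ, 1 ≤ l → l ≤ 2 * N - 1 → ¬ hasDirCycleLen E l) ∧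
      beta E = 2 := by
  have : NeZero N := ⟨by omega⟩
  refine ⟨Fin N × Fin 3, inferInstance, inferInstance, DoubledCycle.adj N, by simp [mul_comm],
    fun l hl hlN hcyc => ?_, DoubledCycle.beta_adj N⟩
  have := Nat.le_of_dvd hl ((DoubledCycle.isHomToDirCycle_level N).dvd_of_hasDirCycleLen hcyc)
  omega
end

section
/- Let H be an undirected graph on n vertices. There exists an orientation G of H such that for every s ∈ [n] and every pair of disjoint subsets A, B ⊆ V with |A| = |B| = s, |e_G(A,B) − (1/2)·ē(A,B)| ≤ 3·√(ē(A,B))·√(s·log(en/s)), where ē(A,B) is the number of edges of H with one endpoint in each of A, B, and e_G(A,B) counts edges of G directed from A to B. -/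
open Finset

/-!
Orient every edge of `H` by an independent fair coin. For fixed disjoint `A`, `B` with
`|A| = |B| = s`, the number of edges pointing from `A` to `B` is a sum of `ē(A, B)` independent
fair indicators, so by Hoeffding's inequality it deviates from `ē(A, B) / 2` by more than
`3 √(ē(A, B)) √(s L)`, `L = log (e n / s)`, with probability at most `2 e^{-18 s L}`. There are at
most `C(n, s)² ≤ e^{2 s L}` such pairs and `e^{-16 s L} ≤ 4^{-s}`, so a union bound over all pairs
and all `s` leaves probability at least `1 / 3` for an orientation with no large deviation.
Probabilities are counted on the cube `V × V → Bool` of coin flips.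
-/

open ProbabilityTheory MeasureTheory

namespace ProbabilityTheory

lemma HasSubgaussianMGF.measure_abs_sum_ge_le_of_iIndepFun {Ω ι : Type*}
    {mΩ : MeasurableSpace Ω} {μ : Measure Ω} {X : ι → Ω → ℝ} (h_indep : iIndepFun X μ)
    {c : ι → NNReal} {s : Finset ι} (h_subG : ∀ i ∈ s, HasSubgaussianMGF (X i) (c i) μ)
    {ε : ℝ} (hε : 0 ≤ ε) :
    μ.real {ω | ε ≤ |∑ i ∈ s, X i ω|} ≤ 2 * Real.exp (-ε ^ 2 / (2 * ∑ i ∈ s, c i)) := by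
  have h_upper := measure_sum_ge_le_of_iIndepFun h_indep h_subG hε
  have h_lower := measure_sum_ge_le_of_iIndepFun (X := fun i => -X i)
    (h_indep.comp (fun _ => Neg.neg) fun _ => measurable_neg) (fun i hi => (h_subG i hi).neg) hε
  have h_split : {ω | ε ≤ |∑ i ∈ s, X i ω|}
      = {ω | ε ≤ ∑ i ∈ s, X i ω} ∪ {ω | ε ≤ ∑ i ∈ s, -X i ω} := by
    ext ω
    simp [le_abs, sum_neg_distrib]
  rw [h_split, two_mul]
  exact (measureReal_union_le _ _).trans (add_le_add h_upper h_lower)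

lemma hasSubgaussianMGF_indicator_sub_half (c : Bool) :
    HasSubgaussianMGF (fun b : Bool => (if b = c then (1 : ℝ) else 0) - 1 / 2) (1 / 4)
      (uniformOn Set.univ) := by
  have h := hasSubgaussianMGF_of_mem_Icc (μ := uniformOn (Set.univ : Set Bool))
    (X := fun b : Bool => if b = c then (1 : ℝ) else 0) (a := 0) (b := 1)
    Measurable.of_discrete.aemeasurable (ae_of_all _ fun b => by split_ifs <;> simp)
  have h_mean : (uniformOn (Set.univ : Set Bool))[fun b => if b = c then (1 : ℝ) else 0]
      = 1 / 2 := by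
    rw [integral_fintype Integrable.of_finite]
    simp only [Measure.real, uniformOn_univ]
    simp
  rw [h_mean] at h
  convert h using 1
  norm_num

end ProbabilityTheory

section FairCoins

variable {ι : Type*} [Fintype ι] [DecidableEq ι]

lemma card_le_abs_card_agree_sub_half_le (F : Finset ι) (σ : ι → Bool) {t : ℝ} (ht : 0 ≤ t) :
    (#{ω : ι → Bool | t ≤ |(#{p ∈ F | ω p = σ p} : ℝ) - #F / 2|} : ℝ)
      ≤ 2 ^ (Fintype.card ι + 1) * Real.exp (-2 * t ^ 2 / #F) := by
  set μ : Measure (ι → Bool) := Measure.pi fun _ => uniformOn Set.univ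
  have hμ : μ = uniformOn Set.univ := by
    rw [← Set.pi_univ Set.univ, uniformOn_pi]
  have h_indep : iIndepFun (fun p (ω : ι → Bool) => (if ω p = σ p then (1 : ℝ) else 0) - 1 / 2) μ :=
    iIndepFun_pi (X := fun p b => (if b = σ p then (1 : ℝ) else 0) - 1 / 2)
      fun _ => Measurable.of_discrete.aemeasurable
  have h_subG : ∀ p ∈ F, HasSubgaussianMGF
      (fun ω : ι → Bool => (if ω p = σ p then (1 : ℝ) else 0) - 1 / 2) (1 / 4) μ := by
    intro p _
    have h := hasSubgaussianMGF_indicator_sub_half (σ p)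
    rw [← (measurePreserving_eval (fun _ : ι => uniformOn (Set.univ : Set Bool)) p).map_eq] at h
    exact h.of_map (μ := μ) (Y := Function.eval p) (measurable_pi_apply p).aemeasurable
  have h_sum : ∀ ω : ι → Bool, ∑ p ∈ F, ((if ω p = σ p then (1 : ℝ) else 0) - 1 / 2)
      = #{p ∈ F | ω p = σ p} - #F / 2 := by
    intro ω
    rw [sum_sub_distrib, sum_boole, sum_const, nsmul_eq_mul]
    ring
  have h := HasSubgaussianMGF.measure_abs_sum_ge_le_of_iIndepFun h_indep h_subG ht
  simp only [h_sum, hμ, Measure.real, uniformOn_univ, ← Finset.coe_filter_univ,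
    Measure.count_apply_finset, Fintype.card_pi, Fintype.card_bool, prod_const, card_univ,
    sum_const, nsmul_eq_mul, ENNReal.toReal_div, ENNReal.toReal_natCast, Nat.cast_pow,
    Nat.cast_ofNat, ENNReal.toReal_pow, ENNReal.toReal_ofNat] at h
  rw [div_le_iff₀ (by positivity)] at h
  refine h.trans_eq ?_
  push_cast
  rw [show -t ^ 2 / (2 * (#F * (1 / 4) : ℝ)) = -2 * t ^ 2 / #F by ring]
  ring

lemma card_sqrt_lt_abs_card_agree_sub_half_le (F : Finset ι) (σ : ι → Bool) {a : ℝ}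
    (ha : 0 ≤ a) :
    (#{ω : ι → Bool | √(a * #F) < |(#{p ∈ F | ω p = σ p} : ℝ) - #F / 2|} : ℝ)
      ≤ 2 ^ (Fintype.card ι + 1) * Real.exp (-2 * a) := by
  rcases F.eq_empty_or_nonempty with rfl | hF_nonempty
  · simp [Real.exp_nonneg]
  have hF : (0 : ℝ) < #F := by exact_mod_cast hF_nonempty.card_pos
  calc (#{ω : ι → Bool | √(a * #F) < |(#{p ∈ F | ω p = σ p} : ℝ) - #F / 2|} : ℝ)
      ≤ #{ω : ι → Bool | √(a * #F) ≤ |(#{p ∈ F | ω p = σ p} : ℝ) - #F / 2|} := by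
        gcongr with ω
        exact le_of_lt
    _ ≤ 2 ^ (Fintype.card ι + 1) * Real.exp (-2 * √(a * #F) ^ 2 / #F) :=
        card_le_abs_card_agree_sub_half_le F σ (Real.sqrt_nonneg _)
    _ = 2 ^ (Fintype.card ι + 1) * Real.exp (-2 * a) := by
        rw [Real.sq_sqrt (by positivity)]
        field_simp

end FairCoins

lemma Nat.choose_le_exp_one_mul_div_pow (n s : ℕ) :
    (n.choose s : ℝ) ≤ (Real.exp 1 * n / s) ^ s := by
  rcases s.eq_zero_or_pos with rfl | hs
  · simp
  have hs' : (s : ℝ) ^ s ≠ 0 := by positivity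
  calc (n.choose s : ℝ) ≤ n ^ s / s.factorial := Nat.choose_le_pow_div s n
    _ = (n / s) ^ s * (s ^ s / s.factorial) := by rw [div_pow, div_mul_div_cancel₀ hs']
    _ ≤ (n / s) ^ s * Real.exp s := by
        gcongr
        exact Real.pow_div_factorial_le_exp _ (Nat.cast_nonneg s) s
    _ = (Real.exp 1 * n / s) ^ s := by rw [← Real.exp_one_pow]; ring

lemma one_le_log_exp_one_mul_div {n s : ℕ} (hs : 0 < s) (hsn : s ≤ n) :
    1 ≤ Real.log (Real.exp 1 * n / s) := by
  have hs' : (0 : ℝ) < s := by exact_mod_cast hs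
  have hsn' : (s : ℝ) ≤ n := by exact_mod_cast hsn
  have hn' : (0 : ℝ) < n := hs'.trans_le hsn'
  rw [Real.le_log_iff_exp_le (by positivity), mul_div_assoc]
  exact le_mul_of_one_le_right (Real.exp_pos 1).le ((one_le_div hs').mpr hsn')

lemma choose_sq_mul_exp_le {n s : ℕ} (hs : 0 < s) (hsn : s ≤ n) :
    (n.choose s : ℝ) ^ 2 * Real.exp (-18 * (s * Real.log (Real.exp 1 * n / s))) ≤ (1 / 4) ^ s := by
  set x := s * Real.log (Real.exp 1 * n / s)
  have hx : (s : ℝ) ≤ x :=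
    le_mul_of_one_le_right (Nat.cast_nonneg s) (one_le_log_exp_one_mul_div hs hsn)
  have h_choose : (n.choose s : ℝ) ≤ Real.exp x := by
    have hpos : 0 < Real.exp 1 * n / s := by
      have : (0 : ℝ) < n := by exact_mod_cast hs.trans_le hsn
      have : (0 : ℝ) < s := by exact_mod_cast hs
      positivity
    calc (n.choose s : ℝ) ≤ (Real.exp 1 * n / s) ^ s := Nat.choose_le_exp_one_mul_div_pow n s
      _ = Real.exp x := by rw [Real.exp_nat_mul, Real.exp_log hpos]
  have h_exp16 : Real.exp (-16) ≤ 1 / 4 := by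
    rw [Real.exp_neg, inv_le_comm₀ (Real.exp_pos _) (by norm_num)]
    linarith [Real.add_one_le_exp (16 : ℝ)]
  calc (n.choose s : ℝ) ^ 2 * Real.exp (-18 * x) ≤ Real.exp x ^ 2 * Real.exp (-18 * x) := by
        gcongr
    _ = Real.exp (-16 * x) := by rw [← Real.exp_nat_mul, ← Real.exp_add]; ring_nf
    _ ≤ Real.exp (-16 * s) := Real.exp_le_exp.mpr (by linarith)
    _ = Real.exp (-16) ^ s := by rw [← Real.exp_nat_mul]; ring_nf
    _ ≤ (1 / 4) ^ s := by gcongr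

lemma sum_choose_sq_mul_exp_lt (n : ℕ) :
    ∑ s ∈ Icc 1 n, (n.choose s : ℝ) ^ 2 * Real.exp (-18 * (s * Real.log (Real.exp 1 * n / s)))
      < 1 / 2 :=
  calc _ ≤ ∑ s ∈ Ico 1 (n + 1), (1 / 4 : ℝ) ^ s := by
        rw [Finset.Ico_add_one_right_eq_Icc]
        exact sum_le_sum fun s hs => choose_sq_mul_exp_le (mem_Icc.1 hs).1 (mem_Icc.1 hs).2
    _ ≤ (1 / 4) ^ 1 / (1 - 1 / 4) := geom_sum_Ico_le_of_lt_one (by norm_num) (by norm_num)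
    _ < 1 / 2 := by norm_num

lemma Finset.exists_forall_notMem_of_sum_card_lt {Ω ι : Type*} [Fintype Ω] [DecidableEq Ω]
    (s : Finset ι) (B : ι → Finset Ω) (h : ∑ i ∈ s, #(B i) < Fintype.card Ω) :
    ∃ ω, ∀ i ∈ s, ω ∉ B i := by
  obtain ⟨ω, -, hω⟩ := exists_mem_notMem_of_card_lt_card
    (card_biUnion_le.trans_lt h : #(s.biUnion B) < #(univ : Finset Ω))
  exact ⟨ω, fun i hi hωi => hω (mem_biUnion.2 ⟨i, hi, hωi⟩)⟩

section SortPair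

variable {α : Type*} [LinearOrder α]

def sortPair (p : α × α) : α × α := if p.1 < p.2 then p else p.swap

lemma injOn_sortPair {A B : Finset α} (hAB : Disjoint A B) :
    Set.InjOn sortPair (↑(A ×ˢ B) : Set (α × α)) := by
  rintro ⟨a, b⟩ hp ⟨a', b'⟩ hq h
  simp only [coe_product, Set.mem_prod, mem_coe] at hp hq
  have hA : ∀ {x}, x ∈ A → x ∉ B := fun hx => disjoint_left.mp hAB hx
  unfold sortPair at h
  split_ifs at h <;> simp only [Prod.swap_prod_mk, Prod.mk.injEq] at h
  · rw [h.1, h.2]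
  · exact absurd (h.1 ▸ hq.2) (hA hp.1)
  · exact absurd (h.1 ▸ hp.2) (hA hq.1)
  · rw [h.1, h.2]

end SortPair

namespace SimpleGraph

section Orientation

variable {V : Type*} [LinearOrder V] (H : SimpleGraph V) [DecidableRel H.Adj]

def orientBy (ω : V × V → Bool) (a b : V) : Bool :=
  decide (H.Adj a b) && if a < b then ω (a, b) else !ω (b, a)

variable {H}

lemma adj_iff_orientBy_or (ω : V × V → Bool) (a b : V) :
    H.Adj a b ↔ (H.orientBy ω a b = true ∨ H.orientBy ω b a = true) := by
  rcases lt_trichotomy a b with h | rfl | h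
  · cases hω : ω (a, b) <;> simp [orientBy, h, h.not_gt, hω, H.adj_comm]
  · simp [orientBy]
  · cases hω : ω (b, a) <;> simp [orientBy, h, h.not_gt, hω, H.adj_comm]

lemma not_orientBy_and (ω : V × V → Bool) (a b : V) :
    ¬ (H.orientBy ω a b = true ∧ H.orientBy ω b a = true) := by
  rintro ⟨hab, hba⟩
  rcases lt_trichotomy a b with h | rfl | h
  · simp_all [orientBy, h.not_gt]
  · simp_all [orientBy]
  · simp_all [orientBy, h.not_gt]

lemma orientBy_eq_true_iff {A : Finset V} {a b : V} (ω : V × V → Bool) (ha : a ∈ A)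
    (hb : b ∉ A) :
    H.orientBy ω a b = true
      ↔ H.Adj a b ∧ ω (sortPair (a, b)) = decide ((sortPair (a, b)).1 ∈ A) := by
  by_cases h : a < b <;> simp [orientBy, sortPair, h, ha, hb]

lemma card_filter_orientBy {A B : Finset V} (hAB : Disjoint A B) (ω : V × V → Bool) :
    #{p ∈ A ×ˢ B | H.orientBy ω p.1 p.2 = true}
      = #{q ∈ ({p ∈ A ×ˢ B | H.Adj p.1 p.2}).image sortPair | ω q = decide (q.1 ∈ A)} := by
  rw [filter_image, card_image_of_injOn ((injOn_sortPair hAB).mono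
    (coe_subset.mpr ((filter_subset _ _).trans (filter_subset _ _)))), filter_filter]
  refine congrArg card (filter_congr fun p hp => ?_)
  rw [mem_product] at hp
  exact orientBy_eq_true_iff ω hp.1 (disjoint_right.mp hAB hp.2)

lemma card_image_sortPair {A B : Finset V} (hAB : Disjoint A B) :
    #(({p ∈ A ×ˢ B | H.Adj p.1 p.2}).image sortPair) = #{p ∈ A ×ˢ B | H.Adj p.1 p.2} :=
  card_image_of_injOn ((injOn_sortPair hAB).mono (coe_subset.mpr (filter_subset _ _)))

end Orientation

variable {V : Type*} [Fintype V] [LinearOrder V]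

lemma card_lt_abs_card_orientBy_sub_half_le {H : SimpleGraph V} [DecidableRel H.Adj]
    {A B : Finset V} (hAB : Disjoint A B) {x : ℝ} (hx : 0 ≤ x) :
    (#{ω : V × V → Bool | 3 * √(#{p ∈ A ×ˢ B | H.Adj p.1 p.2} : ℝ) * √x <
        |(#{p ∈ A ×ˢ B | H.orientBy ω p.1 p.2 = true} : ℝ)
          - (#{p ∈ A ×ˢ B | H.Adj p.1 p.2} : ℝ) / 2|} : ℝ)
      ≤ 2 ^ (Fintype.card (V × V) + 1) * Real.exp (-18 * x) := by
  have key := card_sqrt_lt_abs_card_agree_sub_half_le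
    (({p ∈ A ×ˢ B | H.Adj p.1 p.2}).image sortPair) (fun q => decide (q.1 ∈ A))
    (a := 9 * x) (by positivity)
  rw [card_image_sortPair hAB] at key
  refine le_of_eq_of_le ?_ (key.trans_eq ?_)
  · congr 2
    ext ω
    rw [mem_filter, mem_filter, card_filter_orientBy hAB ω, Real.sqrt_mul (by positivity),
      Real.sqrt_mul (by norm_num), show (9 : ℝ) = 3 ^ 2 by norm_num, Real.sqrt_sq (by norm_num),
      mul_right_comm]
  · ring_nf

lemma exists_orientBy_forall_abs_sub_half_le (H : SimpleGraph V) [DecidableRel H.Adj] :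
    ∃ ω : V × V → Bool, ∀ A B : Finset V, Disjoint A B → #B = #A → 0 < #A →
      |(#{p ∈ A ×ˢ B | H.orientBy ω p.1 p.2 = true} : ℝ)
          - (#{p ∈ A ×ˢ B | H.Adj p.1 p.2} : ℝ) / 2|
        ≤ 3 * √(#{p ∈ A ×ˢ B | H.Adj p.1 p.2} : ℝ)
            * √(#A * Real.log (Real.exp 1 * Fintype.card V / #A)) := by
  set n := Fintype.card V
  set x : ℕ → ℝ := fun s => s * Real.log (Real.exp 1 * n / s)
  set pairs : ℕ → Finset (Finset V × Finset V) := fun s =>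
    {AB ∈ powersetCard s univ ×ˢ powersetCard s univ | Disjoint AB.1 AB.2}
  set bad : (_ : ℕ) × (Finset V × Finset V) → Finset (V × V → Bool) := fun i =>
    {ω | 3 * √(#{p ∈ i.2.1 ×ˢ i.2.2 | H.Adj p.1 p.2} : ℝ) * √(x i.1) <
      |(#{p ∈ i.2.1 ×ˢ i.2.2 | H.orientBy ω p.1 p.2 = true} : ℝ)
        - (#{p ∈ i.2.1 ×ˢ i.2.2 | H.Adj p.1 p.2} : ℝ) / 2|}
  have h_pairs : ∀ s, #(pairs s) ≤ n.choose s ^ 2 := fun s =>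
    (card_filter_le _ _).trans_eq (by rw [card_product, card_powersetCard, card_univ, sq])
  have h_x : ∀ s ∈ Icc 1 n, 0 ≤ x s := fun s hs =>
    mul_nonneg (Nat.cast_nonneg s) (zero_le_one.trans
      (one_le_log_exp_one_mul_div (mem_Icc.1 hs).1 (mem_Icc.1 hs).2))
  have h_union : ∑ i ∈ (Icc 1 n).sigma pairs, (#(bad i) : ℝ) < Fintype.card (V × V → Bool) :=
    calc ∑ i ∈ (Icc 1 n).sigma pairs, (#(bad i) : ℝ)
        = ∑ s ∈ Icc 1 n, ∑ AB ∈ pairs s, (#(bad ⟨s, AB⟩) : ℝ) := sum_sigma _ _ _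
      _ ≤ ∑ s ∈ Icc 1 n, ∑ AB ∈ pairs s,
            2 ^ (Fintype.card (V × V) + 1) * Real.exp (-18 * x s) := by
        gcongr with s hs AB hAB
        exact card_lt_abs_card_orientBy_sub_half_le (mem_filter.1 hAB).2 (h_x s hs)
      _ ≤ ∑ s ∈ Icc 1 n,
            (n.choose s : ℝ) ^ 2 * (2 ^ (Fintype.card (V × V) + 1) * Real.exp (-18 * x s)) := by
        gcongr with s
        rw [sum_const, nsmul_eq_mul]
        gcongr
        exact_mod_cast h_pairs s
      _ = 2 ^ (Fintype.card (V × V) + 1) *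
            ∑ s ∈ Icc 1 n, (n.choose s : ℝ) ^ 2 * Real.exp (-18 * x s) := by
        rw [mul_sum]
        exact sum_congr rfl fun s _ => mul_left_comm _ _ _
      _ < 2 ^ (Fintype.card (V × V) + 1) * (1 / 2) := by
        gcongr
        exact sum_choose_sq_mul_exp_lt n
      _ = Fintype.card (V × V → Bool) := by
        rw [Fintype.card_fun, Fintype.card_bool, pow_succ]
        push_cast
        ring
  obtain ⟨ω, hω⟩ := exists_forall_notMem_of_sum_card_lt _ bad (by exact_mod_cast h_union)
  refine ⟨ω, fun A B hAB hBA hA => ?_⟩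
  have h_mem : (⟨#A, (A, B)⟩ : (_ : ℕ) × (Finset V × Finset V)) ∈ (Icc 1 n).sigma pairs :=
    mem_sigma.2 ⟨mem_Icc.2 ⟨hA, card_le_univ A⟩, mem_filter.2
      ⟨mem_product.2 ⟨mem_powersetCard_univ.2 rfl, mem_powersetCard_univ.2 hBA⟩, hAB⟩⟩
  simpa [bad, x] using hω _ h_mem

end SimpleGraph

theorem stmt15_general {V : Type*} [Fintype V] (H : SimpleGraph V)
    [DecidableRel H.Adj] :
    ∃ E : V → V → Bool,
      (∀ a b, H.Adj a b ↔ (E a b = true ∨ E b a = true)) ∧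
      (∀ a b, ¬ (E a b = true ∧ E b a = true)) ∧
      ∀ s : ℕ, 1 ≤ s → s ≤ Fintype.card V →
        ∀ A B : Finset V, Disjoint A B → A.card = s → B.card = s →
          |(((A ×ˢ B).filter fun p => E p.1 p.2 = true).card : ℝ)
              - (((A ×ˢ B).filter fun p => H.Adj p.1 p.2).card : ℝ) / 2|
            ≤ 3 * Real.sqrt (((A ×ˢ B).filter fun p => H.Adj p.1 p.2).card)
                * Real.sqrt ((s : ℝ) *
                    Real.log (Real.exp 1 * (Fintype.card V : ℝ) / (s : ℝ))) := by
  let : LinearOrder V := LinearOrder.lift' _ (Fintype.equivFin V).injective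
  obtain ⟨ω, hω⟩ := H.exists_orientBy_forall_abs_sub_half_le
  refine ⟨H.orientBy ω, H.adj_iff_orientBy_or ω, H.not_orientBy_and ω, ?_⟩
  rintro s hs - A B hAB rfl hB
  exact hω A B hAB hB hs

/-- every undirected graph `H` on `n` vertices admits an orientation `G` such
that for every `s ∈ [n]` and all disjoint `A, B` with `|A| = |B| = s`,
`|e_G(A,B) - ē(A,B)/2| ≤ 3 √(ē(A,B)) √(s log(en/s))`. -/
theorem stmt15 {V : Type*} [Fintype V] [DecidableEq V] (H : SimpleGraph V)
    [DecidableRel H.Adj] :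
    ∃ E : V → V → Bool,
      (∀ a b, H.Adj a b ↔ (E a b = true ∨ E b a = true)) ∧
      (∀ a b, ¬ (E a b = true ∧ E b a = true)) ∧
      ∀ s : ℕ, 1 ≤ s → s ≤ Fintype.card V →
        ∀ A B : Finset V, Disjoint A B → A.card = s → B.card = s →
          |(((A ×ˢ B).filter fun p => E p.1 p.2 = true).card : ℝ)
              - (((A ×ˢ B).filter fun p => H.Adj p.1 p.2).card : ℝ) / 2|
            ≤ 3 * Real.sqrt (((A ×ˢ B).filter fun p => H.Adj p.1 p.2).card)
                * Real.sqrt ((s : ℝ) *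
                    Real.log (Real.exp 1 * (Fintype.card V : ℝ) / (s : ℝ))) :=
  stmt15_general H
end

section
/- Let G be a digraph on vertex set V with m edges, and suppose there exist disjoint sets A, B ⊆ V with e(A,B) − e(B,A) = τ*(G). Then there exists a linear ordering of V in which the number of forward edges exceeds the number of backward edges by at least τ*(G); consequently β(G) ≤ (m − τ*(G))/2. -/
open Finset

/-!
Call the forward excess of a weak ordering the number of forward minus backward edges, tied edges
counting for neither. Put `A` before `B`, and the remaining vertices `C` either all before or all
after `A ∪ B`: the edges between `C` and `A ∪ B` contribute opposite amounts to the two forward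
excesses, so one of them is at least `e(A,B) - e(B,A) = τ*(G)`. Breaking the remaining ties by a
fixed linear order or by its reverse changes the forward excess by opposite amounts as well, so
some linear order keeps that bound. Its backward edges form a feedback arc set, and
`m = #forward + #backward` turns the bound into `β(G) ≤ (m - τ*(G)) / 2`.
-/

section Ordering

variable {V α : Type*} [Fintype V] [LinearOrder α]

def cmpSign (a b : α) : ℤ := (if a < b then 1 else 0) - (if b < a then 1 else 0)

variable (E : V → V → Prop) [DecidableRel E]

def forwardEdges (g : V → α) : Finset (V × V) := univ.filter fun p => E p.1 p.2 ∧ g p.1 < g p.2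

def backwardEdges (g : V → α) : Finset (V × V) := univ.filter fun p => E p.1 p.2 ∧ g p.2 < g p.1

def forwardExcess (g : V → α) : ℤ := #(forwardEdges E g) - #(backwardEdges E g)

lemma forwardExcess_eq_sum (g : V → α) :
    forwardExcess E g =
      ∑ p ∈ univ.filter (fun p : V × V => E p.1 p.2), cmpSign (g p.1) (g p.2) := by
  simp only [forwardExcess, forwardEdges, backwardEdges, cmpSign, sum_sub_distrib,
    ← filter_filter]
  push_cast [card_filter]
  rfl

lemma cmpSign_toLex_add_cmpSign_toLex_neg {β : Type*} [LinearOrder β] (a b : β) (x y : ℤ) :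
    cmpSign (toLex (a, x)) (toLex (b, y)) + cmpSign (toLex (a, -x)) (toLex (b, -y))
      = 2 * cmpSign a b := by
  simp only [cmpSign, Prod.Lex.toLex_lt_toLex]
  rcases lt_trichotomy a b with h | rfl | h
  · simp [h, h.ne', not_lt.mpr h.le]
  · simp only [lt_irrefl, true_and, false_or, neg_lt_neg_iff]
    split_ifs <;> omega
  · simp [h, h.ne', not_lt.mpr h.le]

lemma exists_injective_forwardExcess_ge {β : Type*} [LinearOrder β] (h : V → β) :
    ∃ g : V → Lex (β × ℤ), Function.Injective g ∧
      forwardExcess E h ≤ forwardExcess E g := by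
  obtain ⟨r, hr⟩ : ∃ r : V → ℤ, Function.Injective r :=
    ⟨_, Nat.cast_injective.comp (Fin.val_injective.comp (Fintype.equivFin V).injective)⟩
  have hsum : forwardExcess E (fun v => toLex (h v, r v)) +
      forwardExcess E (fun v => toLex (h v, -r v)) = 2 * forwardExcess E h := by
    simp only [forwardExcess_eq_sum, ← sum_add_distrib, mul_sum,
      cmpSign_toLex_add_cmpSign_toLex_neg]
  by_cases hle : forwardExcess E h ≤ forwardExcess E (fun v => toLex (h v, r v))
  · exact ⟨_, fun v w hvw => hr (Prod.ext_iff.mp (toLex.injective hvw)).2, hle⟩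
  · exact ⟨fun v => toLex (h v, -r v),
      fun v w hvw => hr (neg_injective (Prod.ext_iff.mp (toLex.injective hvw)).2), by omega⟩

end Ordering

section Blocks

variable {V : Type*} [DecidableEq V]

def blockKey (A B : Finset V) (c : ℤ) (v : V) : ℤ := if v ∈ A then 1 else if v ∈ B then 2 else c

lemma cmpSign_blockKey_add {A B : Finset V} (hAB : Disjoint A B) (v w : V) :
    cmpSign (blockKey A B 0 v) (blockKey A B 0 w) + cmpSign (blockKey A B 3 v) (blockKey A B 3 w)
      = 2 * ((if v ∈ A ∧ w ∈ B then 1 else 0) - (if v ∈ B ∧ w ∈ A then 1 else 0)) := by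
  have hA : ∀ u ∈ A, u ∉ B := fun _ => (disjoint_left.mp hAB ·)
  unfold cmpSign blockKey
  by_cases hvA : v ∈ A <;> by_cases hvB : v ∈ B <;> by_cases hwA : w ∈ A <;>
    by_cases hwB : w ∈ B <;> simp_all

variable [Fintype V] (E : V → V → Prop) [DecidableRel E]

lemma eAB_eq_sum (A B : Finset V) :
    (eAB E A B : ℤ) = ∑ p ∈ univ.filter (fun p : V × V => E p.1 p.2),
      if p.1 ∈ A ∧ p.2 ∈ B then 1 else 0 := by
  rw [← natCast_card_filter, filter_filter, eAB]
  congr 2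
  ext p
  simp [and_comm]

variable {E}

lemma exists_forwardExcess_ge_eAB_sub_eAB {A B : Finset V} (hAB : Disjoint A B) :
    ∃ g : V → Lex (ℤ × ℤ), Function.Injective g ∧
      (eAB E A B : ℤ) - eAB E B A ≤ forwardExcess E g := by
  have hsum : forwardExcess E (blockKey A B 0) + forwardExcess E (blockKey A B 3)
      = 2 * ((eAB E A B : ℤ) - eAB E B A) := by
    simp only [forwardExcess_eq_sum, eAB_eq_sum, ← sum_add_distrib, ← sum_sub_distrib, mul_sum,
      cmpSign_blockKey_add hAB]
  obtain ⟨c, hc⟩ :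
      ∃ c, (eAB E A B : ℤ) - eAB E B A ≤ forwardExcess E (blockKey A B c) := by
    by_cases h : (eAB E A B : ℤ) - eAB E B A ≤ forwardExcess E (blockKey A B 0)
    · exact ⟨0, h⟩
    · exact ⟨3, by omega⟩
  obtain ⟨g, hg, hle⟩ := exists_injective_forwardExcess_ge E (blockKey A B c)
  exact ⟨g, hg, hc.trans hle⟩

end Blocks

section FeedbackArcSets

variable {V α : Type*} [Fintype V] [LinearOrder α] (E : V → V → Prop) [DecidableRel E]

lemma exists_equiv_fin_forwardExcess_eq {g : V → α} (hg : Function.Injective g) :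
    ∃ ρ : V ≃ Fin (Fintype.card V), forwardExcess E ρ = forwardExcess E g := by
  let _ : LinearOrder V := LinearOrder.lift' g hg
  let ρ : V ≃o Fin (Fintype.card V) := (Fintype.orderIsoFinOfCardEq V rfl).symm
  refine ⟨ρ.toEquiv, ?_⟩
  have hlt : ∀ v w, ρ.toEquiv v < ρ.toEquiv w ↔ g v < g w := fun _ _ => ρ.lt_iff_lt
  simp only [forwardExcess, forwardEdges, backwardEdges, hlt]

variable {E}

lemma isFAS_backwardEdges [DecidableEq V] (hirr : ∀ v, ¬ E v v) {g : V → α}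
    (hg : Function.Injective g) : IsFAS E (backwardEdges E g) := by
  refine ⟨fun e he => (mem_filter.mp he).2.1, ?_⟩
  rintro ⟨l, hl, v, hv⟩
  obtain ⟨i, -, hi⟩ := exists_max_image univ (fun i => g (v i)) ⟨⟨0, hl⟩, mem_univ _⟩
  let j : Fin l := ⟨(i.1 + 1) % l, Nat.mod_lt _ hl⟩
  obtain ⟨hE, hback⟩ := hv i
  have hle : g (v i) ≤ g (v j) := not_lt.mp fun h => hback (mem_filter.mpr ⟨mem_univ _, hE, h⟩)
  have hvij : v i = v j := hg (le_antisymm hle (hi j (mem_univ _)))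
  exact hirr _ (hvij ▸ hE)

lemma edgeCount_eq_card_forwardEdges_add [DecidableEq V] (hirr : ∀ v, ¬ E v v) {g : V → α}
    (hg : Function.Injective g) :
    edgeCount E = #(forwardEdges E g) + #(backwardEdges E g) := by
  rw [edgeCount, ← card_union_of_disjoint, forwardEdges, backwardEdges, ← filter_or]
  · congr 1
    refine filter_congr fun p _ => ⟨fun hE => ?_, by rintro (⟨hE, -⟩ | ⟨hE, -⟩) <;> exact hE⟩
    have hne : g p.1 ≠ g p.2 := fun h => hirr p.1 (hg h ▸ hE)
    exact hne.lt_or_gt.imp (⟨hE, ·⟩) (⟨hE, ·⟩)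
  · exact disjoint_filter.mpr fun p _ hf hb => lt_asymm hf.2 hb.2

lemma two_mul_beta_add_forwardExcess_le [DecidableEq V] (hirr : ∀ v, ¬ E v v) {g : V → α}
    (hg : Function.Injective g) : 2 * (beta E : ℤ) + forwardExcess E g ≤ edgeCount E := by
  have hβ : beta E ≤ #(backwardEdges E g) := Nat.sInf_le ⟨_, isFAS_backwardEdges hirr hg, rfl⟩
  rw [edgeCount_eq_card_forwardEdges_add hirr hg, forwardExcess]
  push_cast
  omega

end FeedbackArcSets

/-- if disjoint `A, B` achieve `τ*(G)`, then there is an ordering of the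
vertices in which forward edges exceed backward edges by at least `τ*(G)`; consequently
`β(G) ≤ (m - τ*(G))/2`. -/
theorem stmt17 {V : Type*} [Fintype V] [DecidableEq V] (E : V → V → Prop) [DecidableRel E]
    (hirr : ∀ v, ¬ E v v)
    (A B : Finset V) (hAB : Disjoint A B)
    (hach : (eAB E A B : ℤ) - (eAB E B A : ℤ) = tauStar E) :
    (∃ ρ : V ≃ Fin (Fintype.card V),
      tauStar E ≤
        (((univ : Finset (V × V)).filter fun p => E p.1 p.2 ∧ ρ p.1 < ρ p.2).card : ℤ)
          - (((univ : Finset (V × V)).filter fun p => E p.1 p.2 ∧ ρ p.2 < ρ p.1).card : ℤ))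
    ∧ (beta E : ℝ) ≤ ((edgeCount E : ℝ) - (tauStar E : ℝ)) / 2 := by
  obtain ⟨g, hg, hgAB⟩ := exists_forwardExcess_ge_eAB_sub_eAB (E := E) hAB
  obtain ⟨ρ, hρ⟩ := exists_equiv_fin_forwardExcess_eq E hg
  have hτ : tauStar E ≤ forwardExcess E ρ := hach ▸ hρ ▸ hgAB
  have hβ : 2 * (beta E : ℝ) + forwardExcess E ρ ≤ edgeCount E := by
    exact_mod_cast two_mul_beta_add_forwardExcess_le hirr ρ.injective
  have hτ' : (tauStar E : ℝ) ≤ forwardExcess E ρ := by exact_mod_cast hτ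
  exact ⟨⟨ρ, hτ⟩, by linarith⟩
end
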